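/- arXiv:1212.1907 — 3 statements merged into one kernel-verified Lean document; each statement's English description precedes it below -/
import Mathlib

section
/- Let d ≥ 3, μ > 0, f(r) = r² + 1 − μ r^{2−d}, and r₊ its unique positive root. The improper integral z(r) = ∫_r^∞ dt/f(t) converges for every r > r₊, and z is a strictly decreasing analytic bijection from (r₊, ∞) onto (0, ∞) with z(r) → 0 as r → ∞ and z(r) → ∞ as r → r₊⁺. -/
open Real MeasureTheory Set Filter Asymptotics
open scoped Topology

/-!
For `μ ≥ 0` the function `f(t) = t² + 1 − μ t^{-k}` is strictly increasing on `(0, ∞)`, so it is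
positive to the right of its root `r₊`, and `1/f(t) = O(t⁻²)` at infinity. Hence the tail
integral `z(r) = ∫_r^∞ 1/f` exists, is strictly decreasing with `z' = −1/f`, and tends to `0` at
infinity. Since `f` is differentiable with `f(r₊) = 0`, we have `f(t) ≤ C (t − r₊)` near `r₊`, so
`z(r) ≥ C⁻¹ log((b − r₊)/(r − r₊)) → ∞` as `r → r₊⁺`; the intermediate value theorem then gives
`z '' (r₊, ∞) = (0, ∞)`. Analyticity holds because `z' = −1/f` is analytic: locally, a primitive
of a real analytic function differs by a constant from the termwise primitive of its power series.
-/

section PrimitiveSeries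

variable {a : ℕ → ℝ} {ρ : ℝ}

/-- Coefficients of the termwise primitive `∑ a n * x ^ (n + 1) / (n + 1)` of `∑ a n * x ^ n`. -/
noncomputable def primitiveCoeff (a : ℕ → ℝ) : ℕ → ℝ
  | 0 => 0
  | n + 1 => a n / (n + 1)

lemma summable_mul_pow_of_abs_le (ha : Summable fun n => |a n| * ρ ^ n) {y : ℝ} (hy : |y| ≤ ρ) :
    Summable fun n => a n * y ^ n :=
  .of_norm_bounded ha fun n => by
    rw [Real.norm_eq_abs, abs_mul, abs_pow]; gcongr

lemma summable_primitiveCoeff_mul_pow (ha : Summable fun n => |a n| * ρ ^ n) {y : ℝ}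
    (hy : |y| ≤ ρ) : Summable fun n => primitiveCoeff a n * y ^ n := by
  rw [← summable_nat_add_iff 1]
  refine .of_norm_bounded ((summable_mul_pow_of_abs_le ha hy).abs.mul_left |y|) fun n => ?_
  have hdiv : |a n / (n + 1)| ≤ |a n| := by
    rw [abs_div, abs_of_pos (by positivity : (0 : ℝ) < n + 1)]
    exact div_le_self (abs_nonneg _) (by simp)
  calc ‖a n / (n + 1) * y ^ (n + 1)‖ = |a n / (n + 1)| * |y| ^ (n + 1) := by
        rw [Real.norm_eq_abs, abs_mul, abs_pow]
    _ ≤ |a n| * |y| ^ (n + 1) := by gcongr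
    _ = |y| * |a n * y ^ n| := by rw [abs_mul, abs_pow]; ring

lemma hasDerivAt_tsum_primitiveCoeff_mul_pow (ha : Summable fun n => |a n| * ρ ^ n) {y : ℝ}
    (hy : |y| < ρ) :
    HasDerivAt (fun x => ∑' n, primitiveCoeff a n * x ^ n) (∑' n, a n * y ^ n) y := by
  have hρ : 0 < ρ := (abs_nonneg y).trans_lt hy
  have hu : Summable fun n => n * |primitiveCoeff a n| * ρ ^ (n - 1) := by
    rw [← summable_nat_add_iff 1]
    refine ha.congr fun n => ?_
    simp only [primitiveCoeff, abs_div, abs_of_pos (by positivity : (0 : ℝ) < n + 1)]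
    push_cast
    field_simp
  have hbound : ∀ n x, x ∈ Metric.ball (0 : ℝ) ρ →
      ‖primitiveCoeff a n * (n * x ^ (n - 1))‖ ≤ n * |primitiveCoeff a n| * ρ ^ (n - 1) := by
    intro n x hx
    rw [mem_ball_zero_iff, Real.norm_eq_abs] at hx
    rw [Real.norm_eq_abs, abs_mul, abs_mul, abs_pow, Nat.abs_cast]
    calc |primitiveCoeff a n| * (n * |x| ^ (n - 1)) ≤ |primitiveCoeff a n| * (n * ρ ^ (n - 1)) := by
          gcongr
      _ = _ := by ring
  have H := hasDerivAt_tsum_of_isPreconnected hu Metric.isOpen_ball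
    (convex_ball (0 : ℝ) ρ).isPreconnected
    (fun n x _ => (hasDerivAt_pow n x).const_mul (primitiveCoeff a n)) hbound
    (Metric.mem_ball_self hρ) (summable_primitiveCoeff_mul_pow ha (by simpa using hρ.le))
    (by simpa using hy)
  refine H.congr_deriv ?_
  have hsum := Summable.of_norm_bounded hu fun n => hbound n y (by simpa using hy)
  rw [hsum.tsum_eq_zero_add]
  simp only [primitiveCoeff, Nat.cast_zero, zero_mul, mul_zero, zero_add, Nat.add_sub_cancel]
  congr 1; ext n; push_cast; field_simp

lemma analyticAt_tsum_primitiveCoeff_mul_pow (ha : Summable fun n => |a n| * ρ ^ n)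
    (hρ : 0 < ρ) : AnalyticAt ℝ (fun x => ∑' n, primitiveCoeff a n * x ^ n) 0 := by
  refine ⟨FormalMultilinearSeries.ofScalars ℝ (primitiveCoeff a), hasFPowerSeriesAt_iff'.mpr ?_⟩
  filter_upwards [Metric.ball_mem_nhds (0 : ℝ) hρ] with y hy
  rw [mem_ball_zero_iff, Real.norm_eq_abs] at hy
  simpa [FormalMultilinearSeries.coeff_ofScalars, mul_comm]
    using (summable_primitiveCoeff_mul_pow ha hy.le).hasSum

end PrimitiveSeries

theorem analyticAt_of_eventually_hasDerivAt {F g : ℝ → ℝ} {x₀ : ℝ} (hg : AnalyticAt ℝ g x₀)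
    (hF : ∀ᶠ x in 𝓝 x₀, HasDerivAt F (g x) x) : AnalyticAt ℝ F x₀ := by
  obtain ⟨p, hp⟩ := hg
  obtain ⟨ε, hε, hball⟩ :=
    Metric.eventually_nhds_iff_ball.mp ((hasFPowerSeriesAt_iff'.mp hp).and hF)
  set a := p.coeff
  obtain ⟨ρ, hρ, hρε⟩ : ∃ ρ, 0 < ρ ∧ ρ < ε := ⟨ε / 2, half_pos hε, half_lt_self hε⟩
  have hsub : Metric.ball x₀ ρ ⊆ Metric.ball x₀ ε := Metric.ball_subset_ball hρε.le
  have ha : Summable fun n => |a n| * ρ ^ n := by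
    have := (hball (x₀ + ρ) (by simp [abs_of_pos hρ, hρε])).1.summable.abs
    simpa [abs_mul, abs_of_pos hρ, mul_comm] using this
  set P := fun x => ∑' n, primitiveCoeff a n * (x - x₀) ^ n
  have hP : ∀ x ∈ Metric.ball x₀ ρ, HasDerivAt P (g x) x := by
    intro x hx
    have hgx : ∑' n, a n * (x - x₀) ^ n = g x := by
      simpa only [smul_eq_mul, mul_comm] using (hball x (hsub hx)).1.tsum_eq
    rw [Metric.mem_ball, Real.dist_eq] at hx
    rw [← hgx]
    exact (hasDerivAt_tsum_primitiveCoeff_mul_pow ha hx).comp_sub_const x x₀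
  have hF' : ∀ x ∈ Metric.ball x₀ ρ, HasDerivAt F (g x) x := fun x hx => (hball x (hsub hx)).2
  obtain ⟨c, hc⟩ := Metric.isOpen_ball.exists_eq_add_of_deriv_eq
    (convex_ball x₀ ρ).isPreconnected
    (fun x hx => (hF' x hx).differentiableAt.differentiableWithinAt)
    (fun x hx => (hP x hx).differentiableAt.differentiableWithinAt)
    (fun x hx => (hF' x hx).deriv.trans (hP x hx).deriv.symm)
  have hPan : AnalyticAt ℝ P x₀ := by
    simpa using (analyticAt_tsum_primitiveCoeff_mul_pow ha hρ).comp_sub x₀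
  exact (hPan.add analyticAt_const).congr
    (Filter.eventuallyEq_of_mem (Metric.ball_mem_nhds x₀ hρ) fun x hx => (hc hx).symm)

section TailIntegral

variable {g : ℝ → ℝ} {a : ℝ}

lemma strictAntiOn_integral_Ioi (hint : ∀ r, a < r → IntegrableOn g (Ioi r))
    (hpos : ∀ t ∈ Ioi a, 0 < g t) : StrictAntiOn (fun r => ∫ t in Ioi r, g t) (Ioi a) := by
  intro r hr s _ hrs
  have hII : IntervalIntegrable g volume r s :=
    (intervalIntegrable_iff_integrableOn_Ioc_of_le hrs.le).mpr
      ((hint r hr).mono_set Ioc_subset_Ioi_self)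
  have hdiff := intervalIntegral.integral_Ioi_sub_Ioi (hint r hr) hrs.le
  have hmid := intervalIntegral.intervalIntegral_pos_of_pos_on hII
    (fun t ht => hpos t (lt_trans hr ht.1)) hrs
  exact sub_pos.mp (hdiff ▸ hmid)

lemma hasDerivAt_integral_Ioi (hint : IntegrableOn g (Ioi a)) {r : ℝ} (hr : a < r)
    (hg : ContinuousAt g r) : HasDerivAt (fun u => ∫ t in Ioi u, g t) (-g r) r := by
  have hII : IntervalIntegrable g volume a r :=
    (intervalIntegrable_iff_integrableOn_Ioc_of_le hr.le).mpr (hint.mono_set Ioc_subset_Ioi_self)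
  have H := (intervalIntegral.integral_hasDerivAt_right hII
    (AEStronglyMeasurable.stronglyMeasurableAtFilter_of_mem hint.aestronglyMeasurable
      (Ioi_mem_nhds hr)) hg).const_sub
    (∫ t in Ioi a, g t)
  refine H.congr_of_eventuallyEq ?_
  filter_upwards [Ioi_mem_nhds hr] with u hu
  rw [← intervalIntegral.integral_Ioi_sub_Ioi hint (le_of_lt hu), sub_sub_cancel]

lemma tendsto_integral_Ioi_nhdsGT_atTop {C : ℝ} (hC : 0 < C)
    (hint : ∀ r, a < r → IntegrableOn g (Ioi r)) (hg0 : ∀ t ∈ Ioi a, 0 ≤ g t)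
    (hle : ∀ᶠ t in 𝓝[>] a, (C * (t - a))⁻¹ ≤ g t) :
    Tendsto (fun r => ∫ t in Ioi r, g t) (𝓝[>] a) atTop := by
  obtain ⟨b, hab, hb⟩ := mem_nhdsGT_iff_exists_Ioc_subset.mp hle
  have hlog : Tendsto (fun r => C⁻¹ * (log (b - a) - log (r - a))) (𝓝[>] a) atTop := by
    refine Tendsto.const_mul_atTop (inv_pos.mpr hC) (tendsto_atTop_add_const_left _ _ ?_)
    refine tendsto_neg_atBot_atTop.comp (tendsto_log_nhdsGT_zero.comp ?_)
    have := (Filter.map_subRight_nhdsGT (c := a) (a := a)).le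
    rwa [sub_self] at this
  refine tendsto_atTop_mono' _ ?_ hlog
  filter_upwards [Ioo_mem_nhdsGT hab] with r ⟨har, hrb⟩
  have hI : IntegrableOn g (Ioi r) := hint r har
  calc C⁻¹ * (log (b - a) - log (r - a)) = ∫ t in r..b, (C * (t - a))⁻¹ := by
        simp_rw [mul_inv]
        rw [intervalIntegral.integral_const_mul, intervalIntegral.integral_comp_sub_right
          (fun t => t⁻¹), integral_inv_of_pos (by linarith) (by linarith),
          log_div (by linarith) (by linarith)]
    _ ≤ ∫ t in r..b, g t := by
        refine intervalIntegral.integral_mono_on hrb.le ?_ ?_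
          fun t ht => hb ⟨har.trans_le ht.1, ht.2⟩
        · refine ContinuousOn.intervalIntegrable fun t ht => ?_
          rw [uIcc_of_le hrb.le] at ht
          have hta : 0 < C * (t - a) := mul_pos hC (by linarith [ht.1])
          exact (ContinuousAt.inv₀ (f := fun t => C * (t - a)) (by fun_prop)
            hta.ne').continuousWithinAt
        · exact (intervalIntegrable_iff_integrableOn_Ioc_of_le hrb.le).mpr
            (hI.mono_set Ioc_subset_Ioi_self)
    _ = (∫ t in Ioi r, g t) - ∫ t in Ioi b, g t :=
        (intervalIntegral.integral_Ioi_sub_Ioi hI hrb.le).symm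
    _ ≤ ∫ t in Ioi r, g t :=
        sub_le_self _ (setIntegral_nonneg measurableSet_Ioi fun t ht =>
          hg0 t (mem_Ioi.mpr (hab.trans ht)))

lemma exists_pos_eventually_le_mul_sub {f : ℝ → ℝ} (hf : DifferentiableAt ℝ f a)
    (hfa : f a = 0) : ∃ C > 0, ∀ᶠ t in 𝓝[>] a, f t ≤ C * (t - a) := by
  obtain ⟨C, hC, hO⟩ := hf.isBigO_sub.exists_pos
  refine ⟨C, hC, ?_⟩
  filter_upwards [nhdsWithin_le_nhds hO.bound, self_mem_nhdsWithin] with t ht hta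
  rw [hfa, sub_zero, Real.norm_eq_abs, Real.norm_eq_abs, abs_of_pos (sub_pos.mpr hta)] at ht
  exact (le_abs_self _).trans ht

lemma tendsto_integral_Ioi_inv_nhdsGT_atTop {f : ℝ → ℝ} (hf : DifferentiableAt ℝ f a)
    (hfa : f a = 0) (hpos : ∀ t ∈ Ioi a, 0 < f t)
    (hint : ∀ r, a < r → IntegrableOn (fun t => (f t)⁻¹) (Ioi r)) :
    Tendsto (fun r => ∫ t in Ioi r, (f t)⁻¹) (𝓝[>] a) atTop := by
  obtain ⟨C, hC, hle⟩ := exists_pos_eventually_le_mul_sub hf hfa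
  refine tendsto_integral_Ioi_nhdsGT_atTop hC hint (fun t ht => (inv_pos.mpr (hpos t ht)).le) ?_
  filter_upwards [hle, self_mem_nhdsWithin] with t ht hta
  exact inv_anti₀ (hpos t hta) ht

end TailIntegral

theorem StrictAntiOn.image_Ioi_eq_Ioi {α β : Type*} [ConditionallyCompleteLinearOrder α]
    [TopologicalSpace α] [OrderTopology α] [DenselyOrdered α] [NoMaxOrder α] [LinearOrder β]
    [TopologicalSpace β] [OrderClosedTopology β] {h : α → β} {a : α} {v : β}
    (hanti : StrictAntiOn h (Ioi a)) (hc : ContinuousOn h (Ioi a)) (htop : Tendsto h atTop (𝓝 v))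
    (hbot : Tendsto h (𝓝[>] a) atTop) : h '' Ioi a = Ioi v := by
  refine Subset.antisymm ?_ ?_
  · rintro _ ⟨x, hx, rfl⟩
    obtain ⟨y, hxy⟩ := exists_gt x
    have hy : y ∈ Ioi a := lt_trans hx hxy
    refine lt_of_le_of_lt (le_of_tendsto htop ?_) (hanti hx hy hxy)
    filter_upwards [eventually_ge_atTop y] with w hw
    exact hanti.antitoneOn hy (lt_of_lt_of_le hy hw) hw
  · exact isPreconnected_Ioi.intermediate_value_Ioi (l₂ := 𝓝[>] a)
      (le_principal_iff.mpr (Ioi_mem_atTop a)) inf_le_right hc htop hbot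

/-- The paper's `f(t) = t² + 1 − μ t^{2−d}`, written with `k = d − 2`. -/
noncomputable def lapse (μ : ℝ) (k : ℕ) (t : ℝ) : ℝ := t ^ 2 + 1 - μ / t ^ k

section Lapse

variable {μ : ℝ} {k : ℕ}

lemma strictMonoOn_lapse (hμ : 0 ≤ μ) : StrictMonoOn (lapse μ k) (Ioi 0) := by
  intro s hs t ht hst
  have h1 : s ^ 2 < t ^ 2 := pow_lt_pow_left₀ hst (le_of_lt hs) two_ne_zero
  have h2 : μ / t ^ k ≤ μ / s ^ k :=
    div_le_div_of_nonneg_left hμ (pow_pos hs k) (pow_le_pow_left₀ (le_of_lt hs) hst.le k)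
  simp only [lapse]
  linarith

lemma analyticAt_lapse {t : ℝ} (ht : t ≠ 0) : AnalyticAt ℝ (lapse μ k) t := by
  unfold lapse
  fun_prop (disch := exact pow_ne_zero k ht)

lemma inv_lapse_isBigO_atTop (hμ : 0 ≤ μ) :
    (fun t => (lapse μ k t)⁻¹) =O[atTop] fun t => t ^ (-2 : ℝ) := by
  refine IsBigO.of_bound 2 ?_
  filter_upwards [eventually_ge_atTop 1, eventually_ge_atTop (2 * μ)] with t ht1 htμ
  have htpos : 0 < t := one_pos.trans_le ht1
  have ht2 : 0 < t ^ 2 := pow_pos htpos 2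
  have hμt : μ / t ^ k ≤ μ := div_le_self hμ (one_le_pow₀ ht1)
  have hlapse : t ^ 2 / 2 ≤ lapse μ k t := by
    simp only [lapse]; nlinarith
  rw [Real.norm_eq_abs, Real.norm_eq_abs, abs_inv, abs_of_pos (by linarith : 0 < lapse μ k t),
    Real.rpow_neg htpos.le, Real.rpow_two, abs_inv, abs_of_pos ht2]
  calc (lapse μ k t)⁻¹ ≤ (t ^ 2 / 2)⁻¹ := inv_anti₀ (by positivity) hlapse
    _ = 2 * (t ^ 2)⁻¹ := by field_simp

variable {rp : ℝ}

lemma lapse_pos (hμ : 0 ≤ μ) (hrp : 0 < rp) (hroot : lapse μ k rp = 0) {t : ℝ} (ht : rp < t) :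
    0 < lapse μ k t :=
  hroot ▸ strictMonoOn_lapse hμ hrp (hrp.trans ht) ht

lemma integrableOn_Ioi_inv_lapse (hμ : 0 ≤ μ) (hrp : 0 < rp) (hroot : lapse μ k rp = 0) {r : ℝ}
    (hr : rp < r) : IntegrableOn (fun t => (lapse μ k t)⁻¹) (Ioi r) := by
  have hcont : ContinuousOn (fun t => (lapse μ k t)⁻¹) (Ici r) := fun t ht =>
    ((analyticAt_lapse (hrp.trans_le (hr.le.trans ht)).ne').continuousAt.inv₀
      (lapse_pos hμ hrp hroot (hr.trans_le ht)).ne').continuousWithinAt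
  refine IntegrableOn.mono_set ?_ Ioi_subset_Ici_self
  exact (hcont.locallyIntegrableOn measurableSet_Ici).integrableOn_of_isBigO_atTop
    (inv_lapse_isBigO_atTop hμ) (integrableAtFilter_rpow_atTop_iff.mpr (by norm_num))

end Lapse

theorem stmt_2_general (d : ℕ) (μ : ℝ) (hμ : 0 < μ) (rp : ℝ) (hrp : 0 < rp)
    (hroot : rp ^ 2 + 1 - μ / rp ^ (d - 2) = 0)
    (z : ℝ → ℝ)
    (hz : ∀ r : ℝ, z r = ∫ t in Ioi r, (t ^ 2 + 1 - μ / t ^ (d - 2))⁻¹) :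
    (∀ r : ℝ, rp < r →
      IntegrableOn (fun t : ℝ => (t ^ 2 + 1 - μ / t ^ (d - 2))⁻¹) (Ioi r)) ∧
    StrictAntiOn z (Ioi rp) ∧
    AnalyticOnNhd ℝ z (Ioi rp) ∧
    InjOn z (Ioi rp) ∧ z '' (Ioi rp) = Ioi 0 ∧
    Tendsto z atTop (nhds 0) ∧
    Tendsto z (nhdsWithin rp (Ioi rp)) atTop := by
  obtain rfl : z = fun r => ∫ t in Ioi r, (lapse μ (d - 2) t)⁻¹ := funext hz
  have hint (r : ℝ) : rp < r → IntegrableOn (fun t => (lapse μ (d - 2) t)⁻¹) (Ioi r) :=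
    integrableOn_Ioi_inv_lapse hμ.le hrp hroot
  have hpos (t : ℝ) : t ∈ Ioi rp → 0 < lapse μ (d - 2) t := lapse_pos hμ.le hrp hroot
  have hinv_analytic (t : ℝ) (ht : t ∈ Ioi rp) :
      AnalyticAt ℝ (fun t => (lapse μ (d - 2) t)⁻¹) t :=
    (analyticAt_lapse (hrp.trans ht).ne').inv (hpos t ht).ne'
  have hderiv (r : ℝ) (hr : r ∈ Ioi rp) :
      HasDerivAt (fun r => ∫ t in Ioi r, (lapse μ (d - 2) t)⁻¹) (-(lapse μ (d - 2) r)⁻¹) r := by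
    obtain ⟨a, hrpa, har⟩ := exists_between (mem_Ioi.mp hr)
    exact hasDerivAt_integral_Ioi (hint a hrpa) har (hinv_analytic r hr).continuousAt
  have hanti := strictAntiOn_integral_Ioi hint fun t ht => inv_pos.mpr (hpos t ht)
  have htop : Tendsto (fun r => ∫ t in Ioi r, (lapse μ (d - 2) t)⁻¹) atTop (𝓝 0) :=
    tendsto_integral_Ioi_zero tendsto_id
  have hbot := tendsto_integral_Ioi_inv_nhdsGT_atTop
    (analyticAt_lapse hrp.ne').differentiableAt hroot hpos hint
  refine ⟨hint, hanti, fun r hr => ?_, hanti.injOn,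
    hanti.image_Ioi_eq_Ioi (fun r hr => (hderiv r hr).continuousAt.continuousWithinAt) htop hbot,
    htop, hbot⟩
  exact analyticAt_of_eventually_hasDerivAt (hinv_analytic r hr).neg
    (eventually_of_mem (Ioi_mem_nhds hr) hderiv)

/-- With `f(r) = r² + 1 − μ r^{2−d}` and `r₊` its unique positive root, the
Regge–Wheeler coordinate `z(r) = ∫_r^∞ dt/f(t)` is defined (the integral converges)
for every `r > r₊`, and `z` is a strictly decreasing analytic bijection from
`(r₊,∞)` onto `(0,∞)`, with `z(r) → 0` as `r → ∞` and `z(r) → ∞` as `r → r₊⁺`. -/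
theorem stmt_2 (d : ℕ) (hd : 3 ≤ d) (μ : ℝ) (hμ : 0 < μ) (rp : ℝ) (hrp : 0 < rp)
    (hroot : rp ^ 2 + 1 - μ / rp ^ (d - 2) = 0)
    (huniq : ∀ r : ℝ, 0 < r → r ^ 2 + 1 - μ / r ^ (d - 2) = 0 → r = rp)
    (z : ℝ → ℝ)
    (hz : ∀ r : ℝ, z r = ∫ t in Ioi r, (t ^ 2 + 1 - μ / t ^ (d - 2))⁻¹) :
    (∀ r : ℝ, rp < r →
      IntegrableOn (fun t : ℝ => (t ^ 2 + 1 - μ / t ^ (d - 2))⁻¹) (Ioi r)) ∧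
    StrictAntiOn z (Ioi rp) ∧
    AnalyticOnNhd ℝ z (Ioi rp) ∧
    InjOn z (Ioi rp) ∧ z '' (Ioi rp) = Ioi 0 ∧
    Tendsto z atTop (nhds 0) ∧
    Tendsto z (nhdsWithin rp (Ioi rp)) atTop :=
  stmt_2_general d μ hμ rp hrp hroot z hz
end

section
/- With f(r) = r² + 1 − μ r^{2−d} (d ≥ 3, μ > 0) and z(r) = ∫_r^∞ dt/f(t), the inverse function r(z) satisfies r(z) = 1/z − z/3 + O(z²) as z → 0⁺. -/
open Real MeasureTheory Set

/-! For `t ≥ max 1 μ` the integrand `1/f(t)` exceeds `1/(1 + t²)` by at most `μ t⁻⁵`, so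
`z(r) = arctan r⁻¹ + O(r⁻⁴)`. Since `cot (arctan r⁻¹) = r`, inverting gives
`r(z) = cot (z - O(z⁴)) = cot z + O(z²)`, and `cot z = 1/z - z/3 + O(z³)`. -/

noncomputable def blackening (d : ℕ) (μ t : ℝ) : ℝ := t ^ 2 + 1 - μ / t ^ (d - 2)

lemma blackening_strictMonoOn {d : ℕ} {μ : ℝ} (hμ : 0 ≤ μ) :
    StrictMonoOn (blackening d μ) (Ioi 0) := by
  intro s hs t _ hst
  have hsq : s ^ 2 < t ^ 2 := pow_lt_pow_left₀ hst (le_of_lt hs) two_ne_zero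
  have hfrac : μ / t ^ (d - 2) ≤ μ / s ^ (d - 2) :=
    div_le_div_of_nonneg_left hμ (pow_pos hs _) (pow_le_pow_left₀ (le_of_lt hs) hst.le _)
  unfold blackening
  linarith

lemma blackening_pos_of_lt {d : ℕ} {μ rp t : ℝ} (hμ : 0 ≤ μ) (hrp : 0 < rp)
    (hroot : blackening d μ rp = 0) (ht : rp < t) : 0 < blackening d μ t :=
  hroot ▸ blackening_strictMonoOn hμ hrp (hrp.trans ht) ht

lemma inv_blackening_mem {d : ℕ} {μ t : ℝ} (hd : 3 ≤ d) (hμ : 0 < μ) (h1 : 1 ≤ t)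
    (hμt : μ ≤ t) :
    (1 + t ^ 2)⁻¹ ≤ (blackening d μ t)⁻¹ ∧
      (blackening d μ t)⁻¹ ≤ (1 + t ^ 2)⁻¹ + μ * t ^ (-5 : ℝ) := by
  have ht : 0 < t := one_pos.trans_le h1
  set c := μ / t ^ (d - 2) with hc
  have hc0 : 0 < c := div_pos hμ (pow_pos ht _)
  have hct : c ≤ μ / t :=
    div_le_div_of_nonneg_left hμ.le ht (le_self_pow₀ h1 (by omega))
  have hc1 : c ≤ 1 := hct.trans ((div_le_one ht).2 hμt)
  have hf : blackening d μ t = t ^ 2 + 1 - c := rfl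
  have hfpos : 0 < t ^ 2 + 1 - c := by nlinarith
  rw [hf]
  constructor
  · exact inv_anti₀ hfpos (by linarith)
  · have hdiff : (t ^ 2 + 1 - c)⁻¹ - (1 + t ^ 2)⁻¹ = c / ((t ^ 2 + 1 - c) * (1 + t ^ 2)) := by
      field_simp
      ring
    have hrpow : μ * t ^ (-5 : ℝ) = μ / t / (t ^ 2 * t ^ 2) := by
      rw [show (-5 : ℝ) = -((5 : ℕ) : ℝ) by norm_num, rpow_neg ht.le, rpow_natCast]
      field_simp
    have hbound : c / ((t ^ 2 + 1 - c) * (1 + t ^ 2)) ≤ μ / t / (t ^ 2 * t ^ 2) :=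
      div_le_div₀ (by positivity) hct (by positivity) (by nlinarith [sq_nonneg t])
    linarith

lemma integral_bounds_of_le_of_le_add {α : Type*} [MeasurableSpace α] {ν : Measure α}
    {g k e : α → ℝ} (hg : AEStronglyMeasurable g ν) (hk : Integrable k ν) (he : Integrable e ν)
    (hlo : ∀ᵐ a ∂ν, k a ≤ g a) (hhi : ∀ᵐ a ∂ν, g a ≤ k a + e a) :
    ∫ a, k a ∂ν ≤ ∫ a, g a ∂ν ∧ ∫ a, g a ∂ν ≤ ∫ a, k a ∂ν + ∫ a, e a ∂ν := by
  have hgi : Integrable g ν := by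
    refine (hk.abs.add he.abs).mono' hg ?_
    filter_upwards [hlo, hhi] with a hl hh
    rw [Real.norm_eq_abs, abs_le, Pi.add_apply]
    constructor <;> linarith [neg_abs_le (k a), le_abs_self (k a), le_abs_self (e a),
      abs_nonneg (e a)]
  refine ⟨integral_mono_ae hk hgi hlo, ?_⟩
  rw [← integral_add hk he]
  exact integral_mono_ae hgi (hk.add he) hhi

lemma integral_inv_blackening_mem {d : ℕ} {μ r : ℝ} (hd : 3 ≤ d) (hμ : 0 < μ) (h1 : 1 ≤ r)
    (hμr : μ ≤ r) :
    arctan r⁻¹ ≤ ∫ t in Ioi r, (blackening d μ t)⁻¹ ∧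
      ∫ t in Ioi r, (blackening d μ t)⁻¹ ≤ arctan r⁻¹ + μ / (4 * r ^ 4) := by
  have hr : 0 < r := one_pos.trans_le h1
  have hmeas : Measurable fun t => (blackening d μ t)⁻¹ := by
    unfold blackening
    fun_prop
  have hbounds : ∀ᵐ t ∂(volume.restrict (Ioi r)), (1 + t ^ 2)⁻¹ ≤ (blackening d μ t)⁻¹ ∧
      (blackening d μ t)⁻¹ ≤ (1 + t ^ 2)⁻¹ + μ * t ^ (-5 : ℝ) := by
    filter_upwards [ae_restrict_mem measurableSet_Ioi] with t ht
    exact inv_blackening_mem hd hμ (h1.trans ht.le) (hμr.trans ht.le)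
  have hrpow : ∫ t in Ioi r, μ * t ^ (-5 : ℝ) = μ / (4 * r ^ 4) := by
    rw [integral_const_mul, integral_Ioi_rpow_of_lt (by norm_num) hr,
      show (-5 : ℝ) + 1 = -((4 : ℕ) : ℝ) by norm_num, rpow_neg hr.le, rpow_natCast]
    field_simp
    norm_num
  have key := integral_bounds_of_le_of_le_add hmeas.aestronglyMeasurable
    integrable_inv_one_add_sq.integrableOn
    ((integrableOn_Ioi_rpow_of_lt (by norm_num) hr).const_mul μ)
    (hbounds.mono fun _ h => h.1) (hbounds.mono fun _ h => h.2)
  rwa [integral_Ioi_inv_one_add_sq, ← arctan_inv_of_pos hr, hrpow] at key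

lemma setIntegral_Ioi_le_of_le {g : ℝ → ℝ} {a b : ℝ} (hab : a ≤ b)
    (hg : ∀ t, a < t → 0 ≤ g t) (h : ∫ t in Ioi a, g t ≠ 0) :
    ∫ t in Ioi b, g t ≤ ∫ t in Ioi a, g t := by
  refine setIntegral_mono_set ?_ ?_ (Ioi_subset_Ioi hab).eventuallyLE
  · -- a non-integrable function has Bochner integral `0`
    by_contra hni
    exact h (integral_undef hni)
  · filter_upwards [ae_restrict_mem measurableSet_Ioi] with t ht
    exact hg t ht

lemma half_le_sin {x : ℝ} (h0 : 0 ≤ x) (h1 : x ≤ π / 2) : x / 2 ≤ sin x := by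
  have hπ : x / 2 ≤ 2 / π * x := by
    rw [div_mul_eq_mul_div, le_div_iff₀ pi_pos]
    nlinarith [pi_le_four]
  exact hπ.trans (mul_le_sin h0 h1)

lemma abs_cot_sub_le_sq {x : ℝ} (h0 : 0 < x) (h1 : x ≤ 1 / 2) :
    |cot x - (1 / x - x / 3)| ≤ x ^ 2 := by
  have hs := sin_bound (x := x) (by rw [abs_of_pos h0]; linarith)
  have hc := cos_bound (x := x) (by rw [abs_of_pos h0]; linarith)
  rw [abs_of_pos h0, abs_le] at hs hc
  have hsin : x / 2 ≤ sin x := half_le_sin h0.le (by linarith [pi_gt_three])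
  have hnum : |x * cos x - sin x * (1 - x ^ 2 / 3)| ≤ x ^ 4 / 2 := by
    have hx2 : x ^ 2 ≤ 1 / 4 := by nlinarith
    have := mul_le_mul_of_nonneg_left hs.2 (sq_nonneg x)
    have := mul_le_mul_of_nonneg_left hs.1 (sq_nonneg x)
    have := mul_le_mul_of_nonneg_left hc.2 h0.le
    have := mul_le_mul_of_nonneg_left hc.1 h0.le
    rw [abs_le]
    constructor <;> nlinarith [pow_pos h0 4, pow_pos h0 5, pow_pos h0 6]
  have hsin_pos : 0 < sin x := by linarith
  have hxs : 0 < x * sin x := by positivity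
  have heq : cot x - (1 / x - x / 3) = (x * cos x - sin x * (1 - x ^ 2 / 3)) / (x * sin x) := by
    rw [cot_eq_cos_div_sin]
    field_simp
  rw [heq, abs_div, abs_of_pos hxs, div_le_iff₀ hxs]
  nlinarith

lemma cot_arctan_inv (r : ℝ) : cot (arctan r⁻¹) = r := by
  rw [cot_eq_cos_div_sin, ← inv_div, ← tan_eq_sin_div_cos, tan_arctan, inv_inv]

lemma cot_sub_cot_mem {θ x : ℝ} (hθ : 0 < θ) (hθx : θ ≤ x) (hx : x ≤ π / 2) :
    0 ≤ cot θ - cot x ∧ cot θ - cot x ≤ 4 * (x - θ) / (θ * x) := by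
  have hsθ := half_le_sin hθ.le (hθx.trans hx)
  have hsx := half_le_sin (hθ.le.trans hθx) hx
  have hx0 : 0 < x := hθ.trans_le hθx
  have hsθ_pos : 0 < sin θ := by linarith
  have hsx_pos : 0 < sin x := by linarith
  have hsub : cot θ - cot x = sin (x - θ) / (sin θ * sin x) := by
    rw [cot_eq_cos_div_sin, cot_eq_cos_div_sin, sin_sub]
    field_simp
  have hsin_nonneg : 0 ≤ sin (x - θ) :=
    sin_nonneg_of_nonneg_of_le_pi (by linarith) (by linarith [pi_pos])
  rw [hsub]
  refine ⟨by positivity, ?_⟩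
  calc sin (x - θ) / (sin θ * sin x) ≤ (x - θ) / (θ / 2 * (x / 2)) :=
        div_le_div₀ (by linarith) (sin_le (by linarith)) (by positivity)
          (mul_le_mul hsθ hsx (by positivity) (by linarith))
    _ = 4 * (x - θ) / (θ * x) := by field_simp; ring

lemma abs_sub_le_of_arctan_inv_le_of_le {μ r x : ℝ} (hμ : 0 ≤ μ) (hr : 0 < r) (hx0 : 0 < x)
    (hx : x ≤ 1 / 2) (hμx : μ * x ≤ 1 / 8) (hlo : arctan r⁻¹ ≤ x)
    (hhi : x ≤ arctan r⁻¹ + μ / (4 * r ^ 4)) :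
    |r - (1 / x - x / 3)| ≤ (32 * μ + 1) * x ^ 2 := by
  set θ := arctan r⁻¹
  have hθ : 0 < θ := arctan_pos.2 (inv_pos.2 hr)
  obtain ⟨hcot_le, hcot_sub⟩ := cot_sub_cot_mem hθ hlo (by linarith [pi_gt_three])
  rw [cot_arctan_inv] at hcot_le hcot_sub
  have hcot := abs_le.1 (abs_cot_sub_le_sq hx0 hx)
  have hr_large : 1 / (2 * x) ≤ r := by
    have : 1 / (2 * x) ≤ 1 / x - x / 3 - x ^ 2 := by
      rw [div_le_iff₀ (by positivity)]
      field_simp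
      nlinarith
    linarith
  have hδ : μ / (4 * r ^ 4) ≤ 4 * μ * x ^ 4 := by
    rw [div_le_iff₀ (by positivity)]
    have : 1 ≤ (2 * x * r) ^ 4 := one_le_pow₀ (by rwa [div_le_iff₀' (by positivity)] at hr_large)
    nlinarith [pow_nonneg hx0.le 4]
  have hδx : 4 * μ * x ^ 4 ≤ x / 2 := by nlinarith [pow_pos hx0 3]
  have hθx : x / 2 ≤ θ := by linarith
  have hcot_sub' : r - cot x ≤ 32 * μ * x ^ 2 := by
    calc r - cot x ≤ 4 * (x - θ) / (θ * x) := hcot_sub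
      _ ≤ 4 * (4 * μ * x ^ 4) / (x / 2 * x) := by gcongr; linarith
      _ = 32 * μ * x ^ 2 := by field_simp; ring
  rw [abs_le]
  constructor <;> nlinarith

theorem stmt_3_general (d : ℕ) (hd : 3 ≤ d) (μ : ℝ) (hμ : 0 < μ) (rp : ℝ) (hrp : 0 < rp)
    (hroot : rp ^ 2 + 1 - μ / rp ^ (d - 2) = 0)
    (z : ℝ → ℝ)
    (hz : ∀ r : ℝ, z r = ∫ t in Ioi r, (t ^ 2 + 1 - μ / t ^ (d - 2))⁻¹)
    (R : ℝ → ℝ)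
    (hRrange : ∀ x : ℝ, 0 < x → rp < R x ∧ z (R x) = x) :
    ∃ C ε : ℝ, 0 < C ∧ 0 < ε ∧ ∀ x : ℝ, 0 < x → x < ε →
      |R x - (1 / x - x / 3)| ≤ C * x ^ 2 := by
  have hz' : ∀ r, z r = ∫ t in Ioi r, (blackening d μ t)⁻¹ := hz
  set M := max rp (max 1 μ)
  have hM1 : 1 ≤ M := (le_max_left 1 μ).trans (le_max_right _ _)
  have hMμ : μ ≤ M := (le_max_right 1 μ).trans (le_max_right _ _)
  have hzM : 0 < z M := (arctan_pos.2 (by positivity)).trans_le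
    (hz' M ▸ (integral_inv_blackening_mem hd hμ hM1 hMμ).1)
  refine ⟨32 * μ + 1, min (z M) (min (1 / 2) (1 / (8 * μ))), by positivity,
    lt_min hzM (by positivity), fun x hx0 hxε => ?_⟩
  simp only [lt_min_iff] at hxε
  obtain ⟨hrpR, hzR⟩ := hRrange x hx0
  have hMR : M < R x := by
    by_contra! hRM
    have hanti : z M ≤ z (R x) := by
      rw [hz', hz']
      exact setIntegral_Ioi_le_of_le hRM
        (fun t ht => (inv_pos.2 (blackening_pos_of_lt hμ.le hrp hroot (hrpR.trans ht))).le)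
        (by rw [← hz', hzR]; exact hx0.ne')
    linarith
  obtain ⟨hlo, hhi⟩ :=
    integral_inv_blackening_mem hd hμ (hM1.trans hMR.le) (hMμ.trans hMR.le)
  rw [← hz', hzR] at hlo hhi
  have hμx : μ * x ≤ 1 / 8 := by
    have := mul_lt_mul_of_pos_left hxε.2.2 hμ
    rw [show μ * (1 / (8 * μ)) = 1 / 8 by field_simp] at this
    exact this.le
  exact abs_sub_le_of_arctan_inv_le_of_le hμ.le (hrp.trans hrpR) hx0 hxε.2.1.le hμx hlo hhi

/-- With `z(r) = ∫_r^∞ dt/f(t)` the Regge–Wheeler coordinate and `R` its inverse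
function on `(0,∞)`, one has `R(z) = 1/z − z/3 + O(z²)` as `z → 0⁺`. -/
theorem stmt_3 (d : ℕ) (hd : 3 ≤ d) (μ : ℝ) (hμ : 0 < μ) (rp : ℝ) (hrp : 0 < rp)
    (hroot : rp ^ 2 + 1 - μ / rp ^ (d - 2) = 0)
    (huniq : ∀ r : ℝ, 0 < r → r ^ 2 + 1 - μ / r ^ (d - 2) = 0 → r = rp)
    (z : ℝ → ℝ)
    (hz : ∀ r : ℝ, z r = ∫ t in Ioi r, (t ^ 2 + 1 - μ / t ^ (d - 2))⁻¹)
    (R : ℝ → ℝ)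
    (hR : ∀ r : ℝ, rp < r → R (z r) = r)
    (hRrange : ∀ x : ℝ, 0 < x → rp < R x ∧ z (R x) = x) :
    ∃ C ε : ℝ, 0 < C ∧ 0 < ε ∧ ∀ x : ℝ, 0 < x → x < ε →
      |R x - (1 / x - x / 3)| ≤ C * x ^ 2 :=
  stmt_3_general d hd μ hμ rp hrp hroot z hz R hRrange
end

section
/- Let V(z; h) = h²(ν² − 1/4)z^{−2} + 1 + z² + R(z; h) where, on a fixed compact interval [0, A], |R(z; h)| ≤ C(z³ + h²). Let V₀(z) = 1 + z² + R₀(z) with |R₀(z)| ≤ Cz³, fix T > 0 and δ > 0, and suppose the turning point z_A(E) (the smaller solution of V₀(z) = E) satisfies z_A(1 + sh) = s^{1/2}h^{1/2} + O(h) for bounded s > 0. Then there exist k > 0 and h₀ > 0 such that V₀(z) − (1 + Th) − kz² > (3δ/2)h for all z ∈ (z_A(1 + (T + 2δ)h), A] and all h ∈ (0, h₀), provided additionally V₀ is increasing up to its maximum on [0,A] with V₀ ≥ 1 + c for z bounded away from 0 (c > 0). In particular one may take k = δ/(4(T + 2δ)). -/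
open Real Set

/-- Near-region arithmetic core: for `z` just above the turning point,
the quadratic term dominates. -/
lemma stmt19_near (C T δ k a C₁ p q h z R : ℝ)
    (hδ : 0 < δ) (hC : 0 < C) (hk : 0 < k) (hh : 0 < h)
    (hp2 : p ^ 2 = T + 2 * δ) (hq2 : q ^ 2 = h) (hq0 : 0 ≤ q) (hp0 : 0 ≤ p)
    (hz0 : 0 ≤ z) (hza : z ≤ a)
    (hzL : p * q - C₁ * h ≤ z) (hL0 : 0 ≤ p * q - C₁ * h)
    (hR : -(C * z ^ 3) ≤ R)
    (hk1 : k * (T + 2 * δ) ≤ δ / 16) (hCa : C * a * (T + 2 * δ) ≤ δ / 16)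
    (hCpq : 2 * C₁ * p * q ≤ δ / 8) (hC₁ : 0 < C₁) (hT : 0 < T) :
    1 + z ^ 2 + R - (1 + T * h) - k * z ^ 2 > 3 * δ / 2 * h := by
  have ha0 : 0 ≤ a := le_trans hz0 hza
  have hz2 : (p * q - C₁ * h) ^ 2 ≤ z ^ 2 := by nlinarith [hzL, hL0]
  have hexp1 : (p * q - C₁ * h) ^ 2
      = p ^ 2 * q ^ 2 - 2 * C₁ * p * q * h + (C₁ * h) ^ 2 := by ring
  rw [hexp1, hp2, hq2] at hz2
  have hz2' : (T + 2 * δ) * h - 2 * C₁ * p * q * h ≤ z ^ 2 := by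
    linarith [sq_nonneg (C₁ * h)]
  have hks : k ≤ 1 / 32 := by nlinarith [hk1, mul_pos hk hT, hδ]
  have hCas : C * a ≤ 1 / 32 := by
    nlinarith [hCa, mul_nonneg (mul_nonneg hC.le ha0) hT.le, hδ]
  have hcube : z ^ 3 ≤ a * z ^ 2 := by
    have h1 : z * z ^ 2 ≤ a * z ^ 2 := mul_le_mul_of_nonneg_right hza (sq_nonneg z)
    have h2 : z ^ 3 = z * z ^ 2 := by ring
    linarith
  have hcoef : (0 : ℝ) ≤ 1 - k - C * a := by linarith
  have hstep : (1 - k - C * a) * ((T + 2 * δ) * h - 2 * C₁ * p * q * h)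
      ≤ (1 - k - C * a) * z ^ 2 :=
    mul_le_mul_of_nonneg_left hz2' hcoef
  have hpos : 0 ≤ (k + C * a) * (2 * C₁ * p * q * h) := by
    have := mul_nonneg hL0 (mul_nonneg hC₁.le hh.le)
    have hpq : 0 ≤ 2 * C₁ * p * q * h :=
      mul_nonneg (mul_nonneg (mul_nonneg (by linarith [hC₁.le] : (0:ℝ) ≤ 2 * C₁) hp0) hq0) hh.le
    exact mul_nonneg (by positivity) hpq
  have hexp2 : (1 - k - C * a) * ((T + 2 * δ) * h - 2 * C₁ * p * q * h)
      = (T + 2 * δ) * h - 2 * C₁ * p * q * h - (k + C * a) * ((T + 2 * δ) * h)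
        + (k + C * a) * (2 * C₁ * p * q * h) := by ring
  have hstep2 : (T + 2 * δ) * h - 2 * C₁ * p * q * h - (k + C * a) * ((T + 2 * δ) * h)
      ≤ (1 - k - C * a) * z ^ 2 := by linarith
  have ht1 : 2 * C₁ * p * q * h ≤ δ / 8 * h :=
    mul_le_mul_of_nonneg_right hCpq hh.le
  have ht2 : (k + C * a) * ((T + 2 * δ) * h) ≤ δ / 8 * h := by
    have h1 : (k + C * a) * (T + 2 * δ) ≤ δ / 8 := by
      have : (k + C * a) * (T + 2 * δ)
          = k * (T + 2 * δ) + C * a * (T + 2 * δ) := by ring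
      linarith
    have h2 := mul_le_mul_of_nonneg_right h1 hh.le
    have h3 : (k + C * a) * (T + 2 * δ) * h = (k + C * a) * ((T + 2 * δ) * h) := by ring
    linarith
  have hXexp : (T + 2 * δ) * h = T * h + 2 * δ * h := by ring
  have hmain : T * h + (2 * δ - δ / 4) * h ≤ (1 - k - C * a) * z ^ 2 := by
    linarith
  have hRz : -(C * a * z ^ 2) ≤ R := by
    have h1 : C * z ^ 3 ≤ C * (a * z ^ 2) := mul_le_mul_of_nonneg_left hcube hC.le
    have h2 : C * (a * z ^ 2) = C * a * z ^ 2 := by ring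
    linarith
  have hexp3 : z ^ 2 - k * z ^ 2 - C * a * z ^ 2 = (1 - k - C * a) * z ^ 2 := by ring
  have hδh : 0 < δ * h := mul_pos hδ hh
  linarith

/-- Far-region arithmetic core: the uniform gap beats everything. -/
lemma stmt19_far (T δ k c h z A V : ℝ) (hδ : 0 < δ) (hh : 0 < h) (hk : 0 ≤ k)
    (hV : 1 + c ≤ V) (hz2 : z ^ 2 ≤ A ^ 2) (hk2 : k * A ^ 2 ≤ c / 2)
    (hsh : (T + 2 * δ) * h < c / 2) (hT : 0 < T) :
    V - (1 + T * h) - k * z ^ 2 > 3 * δ / 2 * h := by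
  nlinarith [mul_le_mul_of_nonneg_left hz2 hk]

set_option maxHeartbeats 1600000 in
/-- The quadratic-weight comparison used for Agmon estimates with Gaussian weight:
if `V₀(z) = 1 + z² + O(z³)` on `[0,A]`, `V₀` is increasing on `[0,A]` and strictly
above `1` away from the origin, and the turning point satisfies
`z_A(1 + sh) = s^{1/2}h^{1/2} + O(h)` (for `s = T + 2δ`), then there are `k > 0`
and `h₀ > 0` such that `V₀(z) − (1 + Th) − kz² > (3δ/2)h` for all
`z ∈ (z_A(1+(T+2δ)h), A]` and `h ∈ (0, h₀)`. -/
theorem stmt_19 (A C T δ : ℝ) (hA : 0 < A) (hC : 0 < C) (hT : 0 < T) (hδ : 0 < δ)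
    (V₀ R₀ : ℝ → ℝ)
    (hV₀ : ∀ z ∈ Icc (0 : ℝ) A, V₀ z = 1 + z ^ 2 + R₀ z)
    (hR₀ : ∀ z ∈ Icc (0 : ℝ) A, |R₀ z| ≤ C * z ^ 3)
    (hmono : MonotoneOn V₀ (Icc 0 A))
    (hgap : ∀ a : ℝ, 0 < a → a < A → ∃ c : ℝ, 0 < c ∧ ∀ z ∈ Icc a A, 1 + c ≤ V₀ z)
    (zA : ℝ → ℝ)
    (hzA : ∃ C₁ h₁ : ℝ, 0 < C₁ ∧ 0 < h₁ ∧ ∀ h ∈ Ioo (0 : ℝ) h₁,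
      |zA (1 + (T + 2 * δ) * h) - Real.sqrt (T + 2 * δ) * Real.sqrt h| ≤ C₁ * h) :
    ∃ k h₀ : ℝ, 0 < k ∧ 0 < h₀ ∧ ∀ h ∈ Ioo (0 : ℝ) h₀,
      ∀ z ∈ Ioc (zA (1 + (T + 2 * δ) * h)) A,
        V₀ z - (1 + T * h) - k * z ^ 2 > 3 * δ / 2 * h := by
  obtain ⟨C₁, h₁, hC₁, hh₁, hzA'⟩ := hzA
  set s : ℝ := T + 2 * δ with hs_def
  have hs : 0 < s := by positivity
  have hsp : (0:ℝ) < Real.sqrt s := Real.sqrt_pos.mpr hs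
  set a : ℝ := min (A / 2) (δ / (16 * C * s)) with ha_def
  have ha : 0 < a := lt_min (by linarith) (by positivity)
  have haA : a < A := lt_of_le_of_lt (min_le_left _ _) (by linarith)
  have haC : C * a * s ≤ δ / 16 := by
    have h1 : a ≤ δ / (16 * C * s) := min_le_right _ _
    have h2 : C * a * s ≤ C * (δ / (16 * C * s)) * s := by
      nlinarith [mul_nonneg (mul_pos hC hs).le (sub_nonneg.mpr h1)]
    have h3 : C * (δ / (16 * C * s)) * s = δ / 16 := by field_simp
    linarith
  obtain ⟨c, hc, hgapc⟩ := hgap a ha haA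
  clear_value a
  set k : ℝ := min (δ / (16 * s)) (c / (2 * A ^ 2)) with hk_def
  have hk : 0 < k := lt_min (by positivity) (by positivity)
  have hk1 : k * s ≤ δ / 16 := by
    have h1 : k ≤ δ / (16 * s) := min_le_left _ _
    calc k * s ≤ δ / (16 * s) * s := by nlinarith
      _ = δ / 16 := by field_simp
  have hk2 : k * A ^ 2 ≤ c / 2 := by
    have h1 : k ≤ c / (2 * A ^ 2) := min_le_right _ _
    have hA2 : (0:ℝ) < A ^ 2 := by positivity
    calc k * A ^ 2 ≤ c / (2 * A ^ 2) * A ^ 2 := by nlinarith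
      _ = c / 2 := by field_simp
  set h₀ : ℝ := min (min h₁ ((δ / (16 * C₁ * Real.sqrt s + 1)) ^ 2))
      (min (s / C₁ ^ 2) (c / (2 * s))) with hh₀_def
  have hh₀ : 0 < h₀ :=
    lt_min (lt_min hh₁ (by positivity)) (lt_min (by positivity) (by positivity))
  clear_value k h₀
  refine ⟨k, h₀, hk, hh₀, ?_⟩
  intro h hh z hz
  have hhpos : 0 < h := hh.1
  have hhlt : h < min (min h₁ ((δ / (16 * C₁ * Real.sqrt s + 1)) ^ 2))
      (min (s / C₁ ^ 2) (c / (2 * s))) := hh₀_def ▸ hh.2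
  have hh1 : h < h₁ := lt_of_lt_of_le hhlt (le_trans (min_le_left _ _) (min_le_left _ _))
  have hh2 : h < (δ / (16 * C₁ * Real.sqrt s + 1)) ^ 2 :=
    lt_of_lt_of_le hhlt (le_trans (min_le_left _ _) (min_le_right _ _))
  have hh3 : h < s / C₁ ^ 2 :=
    lt_of_lt_of_le hhlt (le_trans (min_le_right _ _) (min_le_left _ _))
  have hh4 : h < c / (2 * s) :=
    lt_of_lt_of_le hhlt (le_trans (min_le_right _ _) (min_le_right _ _))
  have hzb := hzA' h ⟨hhpos, hh1⟩
  rw [abs_le] at hzb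
  set p : ℝ := Real.sqrt s with hp_def
  set q : ℝ := Real.sqrt h with hq_def
  have hp2 : p ^ 2 = s := Real.sq_sqrt hs.le
  have hq2 : q ^ 2 = h := Real.sq_sqrt hhpos.le
  have hq0 : 0 < q := Real.sqrt_pos.mpr hhpos
  clear_value p q
  clear_value s
  clear hhlt hh₀_def ha_def hk_def hzA' hmono hgap
  -- √h bound
  have hqlt : q < δ / (16 * C₁ * p + 1) := by
    have hX : (0:ℝ) < δ / (16 * C₁ * p + 1) := by positivity
    have h' := Real.sqrt_lt_sqrt hhpos.le hh2
    rw [Real.sqrt_sq hX.le, ← hq_def] at h'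
    exact h'
  have hCpq : 2 * C₁ * p * q ≤ δ / 8 := by
    have hd : (0:ℝ) < 16 * C₁ * p + 1 := by positivity
    have h1 : q * (16 * C₁ * p + 1) < δ := (lt_div_iff₀ hd).mp hqlt
    nlinarith [hq0.le, mul_pos hC₁ hsp]
  -- C₁ h ≤ p q
  have hC1h : C₁ * h ≤ p * q := by
    have h1 : C₁ ^ 2 * h ≤ s := by
      have h1' : h * C₁ ^ 2 < s := (lt_div_iff₀ (by positivity : (0:ℝ) < C₁ ^ 2)).mp hh3
      linarith
    have h3 : C₁ ^ 2 * q ^ 2 ≤ p ^ 2 := by rw [hq2, hp2]; exact h1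
    have h2 : C₁ * q ≤ p := by nlinarith [h3, hq0, hsp, mul_pos hC₁ hq0]
    have hqq : C₁ * h = C₁ * q * q := by rw [← hq2]; ring
    rw [hqq]
    nlinarith [hq0.le, h2]
  -- lower bound for zA
  have hzAlb : p * q - C₁ * h ≤ zA (1 + s * h) := by
    have := hzb.2
    linarith
  have hzL : p * q - C₁ * h ≤ z := le_trans hzAlb hz.1.le
  have hL0 : 0 ≤ p * q - C₁ * h := by linarith [hC1h]
  have hz0 : 0 ≤ z := le_trans hL0 hzL
  have hzub : z ≤ A := hz.2
  have hzIcc : z ∈ Icc (0:ℝ) A := ⟨hz0, hzub⟩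
  rcases le_or_gt z a with hza | hza
  · -- near region: use quadratic expansion
    have hV := hV₀ z hzIcc
    have hR := hR₀ z hzIcc
    rw [abs_le] at hR
    rw [hV, hs_def] at *
    exact stmt19_near C T δ k a C₁ p q h z (R₀ z) hδ hC hk hhpos hp2 hq2 hq0.le
      hsp.le hz0 hza hzL hL0 hR.1 hk1 haC hCpq hC₁ hT
  · -- far region: use the gap
    have hV := hgapc z ⟨hza.le, hzub⟩
    have hzA2 : z ^ 2 ≤ A ^ 2 := by nlinarith
    have hsh : s * h < c / 2 := by
      have h1' : h * (2 * s) < c := (lt_div_iff₀ (by positivity : (0:ℝ) < 2 * s)).mp hh4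
      linarith
    rw [hs_def] at *
    exact stmt19_far T δ k c h z A (V₀ z) hδ hhpos hk.le hV hzA2 hk2 hsh hT
end
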